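/- arXiv:1407.7604 — 3 statements merged into one kernel-verified Lean document; each statement's English description precedes it below -/
import Mathlib

section
/- Let G be a finite simple connected graph with maximum degree at most 4, not isomorphic to C_{2,5}, such that ν_s(G) < n(G)/9 and every induced subgraph G' of G on a proper subset of the vertices satisfies ν_s(G') ≥ (n(G') − i(G'))/9. Then every vertex of G that is adjacent to a vertex of degree 1 has degree 4. -/
open SimpleGraph

/-- An induced matching of a simple graph `G`: a set of edges of `G` such that no two
distinct edges share an endpoint, and no edge of `G` joins an endpoint of one edge of
the matching to an endpoint of another. -/
def IsInducedMatching {V : Type*} (G : SimpleGraph V) (M : Finset (Sym2 V)) : Prop :=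
  (↑M : Set (Sym2 V)) ⊆ G.edgeSet ∧
    ∀ e ∈ M, ∀ f ∈ M, e ≠ f → ∀ a ∈ e, ∀ b ∈ f, a ≠ b ∧ ¬ G.Adj a b

/-- The strong matching number `ν_s(G)`: the maximum size of an induced matching of `G`. -/
noncomputable def strongMatchingNumber {V : Type*} [Fintype V] (G : SimpleGraph V) : ℕ :=
  sSup {n : ℕ | ∃ M : Finset (Sym2 V), IsInducedMatching G M ∧ M.card = n}

/-- The number of isolated vertices of `G`. -/
noncomputable def isolatedCount {V : Type*} [Fintype V] (G : SimpleGraph V) : ℕ :=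
  Set.ncard {v : V | ∀ w, ¬ G.Adj v w}

/-- The graph `C_{2,5}` obtained from the 5-cycle by replacing each vertex with two
nonadjacent vertices; two vertices in different pairs are adjacent iff the corresponding
vertices of `C_5` are adjacent. -/
def C25 : SimpleGraph (Fin 5 × Fin 2) where
  Adj x y := x.1 + 1 = y.1 ∨ y.1 + 1 = x.1
  symm := ⟨fun _ _ h => Or.symm h⟩
  loopless := ⟨by intro x; revert x; decide⟩

/-!
Let `u` be a leaf with neighbour `v` of degree `d ≤ 3`, and let `I` be the set of isolated
vertices of `G - N[v]`. A maximum induced matching of `G - N[v]` extends by `uv`, so minimality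
together with `ν_s(G) < n/9` gives `|I| + d ≥ 9`. By connectivity every vertex of `I` is adjacent
to one of the `d - 1` neighbours of `v` other than `u`, so `|I| ≤ 3(d - 1)`. Hence `d = 3` and
`|I| = 6`, which leaves no room for further vertices: `G` has at most ten vertices, yet it has
an induced matching of size two.
-/

open Finset

section

variable {V W : Type*} {G : SimpleGraph V}

namespace SimpleGraph

theorem Preconnected.mem_of_forall_adj_mem (hG : G.Preconnected) {S : Set V} {v : V}
    (hv : v ∈ S) (hS : ∀ a ∈ S, ∀ b, G.Adj a b → b ∈ S) (z : V) : z ∈ S := by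
  by_contra hz
  obtain ⟨d, -, hd, hd'⟩ := (hG v z).some.exists_boundary_dart S hv hz
  exact hd' (hS _ hd _ d.adj)

theorem eq_of_adj_of_degree_eq_one {u v w : V} [Fintype (G.neighborSet u)]
    (hu : G.degree u = 1) (hv : G.Adj u v) (hw : G.Adj u w) : w = v :=
  (degree_eq_one_iff_existsUnique_adj.mp hu).unique hw hv

def isolatedVerticesIn (G : SimpleGraph V) [DecidableRel G.Adj] (s : Finset V) :
    Finset V :=
  {w ∈ s | ∀ z ∈ s, ¬ G.Adj w z}

theorem mem_isolatedVerticesIn [DecidableRel G.Adj] {s : Finset V} {w : V} :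
    w ∈ G.isolatedVerticesIn s ↔ w ∈ s ∧ ∀ z ∈ s, ¬ G.Adj w z := by
  simp [isolatedVerticesIn]

def closedNeighborFinset (G : SimpleGraph V) [Fintype V] [DecidableEq V] [DecidableRel G.Adj]
    (v : V) : Finset V :=
  insert v (G.neighborFinset v)

def secondNeighborFinset (G : SimpleGraph V) [Fintype V] [DecidableEq V] [DecidableRel G.Adj]
    (v u : V) : Finset V :=
  ((G.neighborFinset v).erase u).biUnion fun t => (G.neighborFinset t).erase v

end SimpleGraph

theorem IsInducedMatching.map {G' : SimpleGraph W} (f : G' ↪g G) {M : Finset (Sym2 W)}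
    (hM : IsInducedMatching G' M) : IsInducedMatching G (M.map f.toEmbedding.sym2Map) := by
  refine ⟨?_, ?_⟩
  · intro e he
    obtain ⟨e, he', rfl⟩ := mem_map.mp he
    induction e using Sym2.ind with
    | _ a b => simpa using hM.1 he'
  · simp only [mem_map]
    rintro _ ⟨e, he, rfl⟩ _ ⟨e', he', rfl⟩ hne _ ha _ hb
    obtain ⟨a, ha', rfl⟩ := Sym2.mem_map.mp ha
    obtain ⟨b, hb', rfl⟩ := Sym2.mem_map.mp hb
    obtain ⟨hab, hadj⟩ := hM.2 e he e' he' (ne_of_apply_ne _ hne) a ha' b hb'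
    exact ⟨f.injective.ne hab, by simpa using hadj⟩

theorem IsInducedMatching.insert [DecidableEq V] {M : Finset (Sym2 V)}
    (hM : IsInducedMatching G M) {a b : V} (hab : G.Adj a b)
    (hfar : ∀ e ∈ M, ∀ z ∈ e, z ≠ a ∧ z ≠ b ∧ ¬ G.Adj a z ∧ ¬ G.Adj b z) :
    IsInducedMatching G (insert s(a, b) M) := by
  refine ⟨?_, ?_⟩
  · simpa [Set.insert_subset_iff] using ⟨hab, hM.1⟩
  · have hfar' : ∀ e ∈ M, ∀ z ∈ e, ∀ p ∈ s(a, b), p ≠ z ∧ ¬ G.Adj p z := by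
      intro e he z hz p hp
      obtain ⟨hza, hzb, hnaz, hnbz⟩ := hfar e he z hz
      rcases Sym2.mem_iff.mp hp with rfl | rfl
      exacts [⟨hza.symm, hnaz⟩, ⟨hzb.symm, hnbz⟩]
    simp only [mem_insert]
    rintro e (rfl | he) f (rfl | hf) hne p hp q hq
    · exact absurd rfl hne
    · exact hfar' f hf q hq p hp
    · obtain ⟨h, h'⟩ := hfar' e he p hp q hq
      exact ⟨h.symm, fun hpq => h' hpq.symm⟩
    · exact hM.2 e he f hf hne p hp q hq

theorem isInducedMatching_singleton {a b : V} (hab : G.Adj a b) :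
    IsInducedMatching G {s(a, b)} :=
  ⟨by simpa using hab, by simp⟩

theorem isolatedCount_induce_coe [DecidableRel G.Adj] (s : Finset V) :
    isolatedCount (G.induce (↑s : Set V)) = #(G.isolatedVerticesIn s) := by
  have hset : {w : (↑s : Set V) | ∀ z, ¬ (G.induce (↑s : Set V)).Adj w z} =
      {w : (↑s : Set V) | ↑w ∈ (↑(G.isolatedVerticesIn s) : Set V)} := by
    ext ⟨w, hw⟩
    simp_all [isolatedVerticesIn]
  rw [isolatedCount, hset, Set.ncard_subtype, ← Set.ncard_coe_finset]
  congr 1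
  exact Set.inter_eq_left.mpr fun w hw => (mem_filter.mp hw).1

section Finite

variable [Fintype V]

theorem bddAbove_card_isInducedMatching (G : SimpleGraph V) :
    BddAbove {n | ∃ M, IsInducedMatching G M ∧ #M = n} :=
  ⟨Fintype.card (Sym2 V), by rintro _ ⟨M, -, rfl⟩; exact card_le_univ M⟩

theorem IsInducedMatching.card_le_strongMatchingNumber {M : Finset (Sym2 V)}
    (hM : IsInducedMatching G M) : #M ≤ strongMatchingNumber G :=
  le_csSup (bddAbove_card_isInducedMatching G) ⟨M, hM, rfl⟩

theorem exists_isInducedMatching_card_eq_strongMatchingNumber (G : SimpleGraph V) :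
    ∃ M, IsInducedMatching G M ∧ #M = strongMatchingNumber G :=
  Nat.sSup_mem (s := {n | ∃ M, IsInducedMatching G M ∧ #M = n})
    ⟨0, ∅, ⟨by simp, by simp⟩, rfl⟩ (bddAbove_card_isInducedMatching G)

theorem IsInducedMatching.card_add_one_le_strongMatchingNumber [DecidableEq V]
    {M : Finset (Sym2 V)} (hM : IsInducedMatching G M) {a b : V} (hab : G.Adj a b)
    (hfar : ∀ e ∈ M, ∀ z ∈ e, z ≠ a ∧ z ≠ b ∧ ¬ G.Adj a z ∧ ¬ G.Adj b z) :
    #M + 1 ≤ strongMatchingNumber G := by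
  have hnew : s(a, b) ∉ M := fun h => (hfar _ h a (Sym2.mem_mk_left a b)).1 rfl
  simpa [card_insert_of_notMem hnew] using
    (hM.insert hab hfar).card_le_strongMatchingNumber

theorem two_le_strongMatchingNumber {a b c d : V} (hab : G.Adj a b) (hcd : G.Adj c d)
    (hfar : ∀ z ∈ s(c, d), z ≠ a ∧ z ≠ b ∧ ¬ G.Adj a z ∧ ¬ G.Adj b z) :
    2 ≤ strongMatchingNumber G := by
  classical
  simpa using (isInducedMatching_singleton hcd).card_add_one_le_strongMatchingNumber hab
    (by simpa using hfar)

theorem strongMatchingNumber_induce_add_one_le (s : Set V) [Fintype s] {u v : V}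
    (huv : G.Adj u v) (hu : u ∉ s) (hv : v ∉ s)
    (hus : ∀ a ∈ s, ¬ G.Adj u a) (hvs : ∀ a ∈ s, ¬ G.Adj v a) :
    strongMatchingNumber (G.induce s) + 1 ≤ strongMatchingNumber G := by
  classical
  obtain ⟨M, hM, hcard⟩ := exists_isInducedMatching_card_eq_strongMatchingNumber (G.induce s)
  rw [← hcard, ← card_map (Embedding.induce s).toEmbedding.sym2Map]
  refine (hM.map (Embedding.induce s)).card_add_one_le_strongMatchingNumber huv ?_
  simp only [mem_map]
  rintro _ ⟨e, -, rfl⟩ _ hz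
  obtain ⟨z, -, rfl⟩ := Sym2.mem_map.mp hz
  exact ⟨fun h => hu (h ▸ z.2), fun h => hv (h ▸ z.2), hus z z.2, hvs z z.2⟩

end Finite

namespace SimpleGraph

variable [Fintype V] [DecidableEq V] [DecidableRel G.Adj]

@[simp]
theorem mem_closedNeighborFinset {v w : V} :
    w ∈ G.closedNeighborFinset v ↔ w = v ∨ G.Adj v w := by
  simp [closedNeighborFinset]

theorem card_closedNeighborFinset (v : V) : #(G.closedNeighborFinset v) = G.degree v + 1 := by
  rw [closedNeighborFinset, card_insert_of_notMem (by simp), card_neighborFinset_eq_degree]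

theorem mem_secondNeighborFinset {v u w : V} :
    w ∈ G.secondNeighborFinset v u ↔
      ∃ t, t ≠ u ∧ G.Adj v t ∧ w ≠ v ∧ G.Adj t w := by
  simp [secondNeighborFinset, and_assoc]

theorem card_neighborFinset_erase_le {k : ℕ} (hdeg : ∀ t, G.degree t ≤ k) {t v : V}
    (htv : G.Adj t v) : #((G.neighborFinset t).erase v) ≤ k - 1 := by
  rw [card_erase_of_mem (by simpa), card_neighborFinset_eq_degree]
  exact Nat.sub_le_sub_right (hdeg t) 1

theorem card_secondNeighborFinset_le {k : ℕ} (hdeg : ∀ t, G.degree t ≤ k) {u v : V}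
    (hvu : G.Adj v u) : #(G.secondNeighborFinset v u) ≤ (G.degree v - 1) * (k - 1) := by
  calc #(G.secondNeighborFinset v u)
      _ ≤ ∑ t ∈ (G.neighborFinset v).erase u, #((G.neighborFinset t).erase v) :=
        card_biUnion_le
      _ ≤ #((G.neighborFinset v).erase u) * (k - 1) :=
        sum_le_card_nsmul _ _ _ fun t ht => card_neighborFinset_erase_le hdeg
          ((mem_neighborFinset _ _ _).mp (mem_erase.mp ht).2).symm
      _ = (G.degree v - 1) * (k - 1) := by
        rw [card_erase_of_mem (by simpa), card_neighborFinset_eq_degree]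

theorem nine_le_card_isolatedVerticesIn_add_degree {u v : V} (huv : G.Adj u v)
    (hu : G.degree u = 1)
    (hsmall : (strongMatchingNumber G : ℚ) < (Fintype.card V : ℚ) / 9)
    (hmin : ((#(G.closedNeighborFinset v)ᶜ : ℚ) -
        isolatedCount (G.induce (↑(G.closedNeighborFinset v)ᶜ : Set V))) / 9 ≤
        strongMatchingNumber (G.induce (↑(G.closedNeighborFinset v)ᶜ : Set V))) :
    9 ≤ #(G.isolatedVerticesIn (G.closedNeighborFinset v)ᶜ) + G.degree v := by
  have hlift := strongMatchingNumber_induce_add_one_le (↑(G.closedNeighborFinset v)ᶜ) huv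
    (by simp [huv.symm]) (by simp) (fun a ha hua => by
      simp [eq_of_adj_of_degree_eq_one hu huv hua] at ha)
    (fun a ha hva => by simp [hva] at ha)
  have hcard := card_compl_add_card (G.closedNeighborFinset v)
  rw [card_closedNeighborFinset] at hcard
  rw [isolatedCount_induce_coe] at hmin
  suffices h : (8 : ℚ) < #(G.isolatedVerticesIn (G.closedNeighborFinset v)ᶜ) + G.degree v by
    exact_mod_cast h
  qify at hlift hcard
  linarith

theorem isolatedVerticesIn_compl_subset_secondNeighborFinset (hG : G.Preconnected) {u v : V}
    (huv : G.Adj u v) (hu : G.degree u = 1) :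
    G.isolatedVerticesIn (G.closedNeighborFinset v)ᶜ ⊆ G.secondNeighborFinset v u := by
  intro w hw
  obtain ⟨hws, hiso⟩ := mem_isolatedVerticesIn.mp hw
  have : Nontrivial V := ⟨⟨u, v, huv.ne⟩⟩
  obtain ⟨t, hwt⟩ := hG.exists_adj_of_nontrivial w
  have hwv : w ≠ v ∧ ¬ G.Adj v w := by simpa using hws
  have hvt : G.Adj v t := by
    have : t = v ∨ G.Adj v t := by
      by_contra h
      exact hiso t (by simpa using h) hwt
    exact this.resolve_left fun htv => hwv.2 (htv ▸ hwt.symm)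
  refine mem_secondNeighborFinset.mpr ⟨t, ?_, hvt, hwv.1, hwt.symm⟩
  rintro rfl
  exact hwv.1 (eq_of_adj_of_degree_eq_one hu huv hwt.symm)

theorem closedNeighborFinset_union_isolatedVerticesIn_eq_univ
    (hG : G.Preconnected) {u v : V} (huv : G.Adj u v) (hu : G.degree u = 1)
    (hsub : G.secondNeighborFinset v u ⊆ G.isolatedVerticesIn (G.closedNeighborFinset v)ᶜ) :
    G.closedNeighborFinset v ∪ G.isolatedVerticesIn (G.closedNeighborFinset v)ᶜ = univ := by
  refine eq_univ_of_forall fun z => hG.mem_of_forall_adj_mem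
    (S := ↑(G.closedNeighborFinset v ∪ _)) (v := v) (by simp) ?_ z
  intro a ha b hab
  simp only [coe_union, Set.mem_union, mem_coe, mem_closedNeighborFinset] at ha ⊢
  rcases ha with (rfl | hva) | haI
  · exact .inl (.inr hab)
  · by_cases hau : a = u
    · subst hau
      exact .inl (.inl (eq_of_adj_of_degree_eq_one hu huv hab))
    · by_cases hbv : b = v
      · exact .inl (.inl hbv)
      · exact .inr (hsub (mem_secondNeighborFinset.mpr ⟨a, hau, hva, hbv, hab⟩))
  · obtain ⟨-, hiso⟩ := mem_isolatedVerticesIn.mp haI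
    by_contra hb
    exact hiso b (by simpa using fun h => hb (.inl h)) hab

theorem exists_secondNeighborFinset_eq_union {u v : V} (hvu : G.Adj v u)
    (hv : G.degree v = 3) :
    ∃ x y, x ≠ y ∧ G.Adj v x ∧ G.Adj v y ∧
      G.secondNeighborFinset v u =
        (G.neighborFinset x).erase v ∪ (G.neighborFinset y).erase v := by
  obtain ⟨x, y, hxy, hN⟩ : ∃ x y, x ≠ y ∧ (G.neighborFinset v).erase u = {x, y} := by
    apply card_eq_two.mp
    rw [card_erase_of_mem (by simpa), card_neighborFinset_eq_degree, hv]
  have hvN : ∀ t ∈ ({x, y} : Finset V), G.Adj v t := fun t ht =>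
    (mem_neighborFinset _ _ _).mp (mem_of_mem_erase (hN ▸ ht))
  refine ⟨x, y, hxy, hvN x (by simp), hvN y (by simp), ?_⟩
  rw [secondNeighborFinset, hN, biUnion_insert, singleton_biUnion]

theorem two_le_strongMatchingNumber_of_secondNeighborFinset_subset {k : ℕ}
    (hdeg : ∀ t, G.degree t ≤ k) {u v : V} (hvu : G.Adj v u) (hv : G.degree v = 3)
    (hcard : 2 * (k - 1) ≤ #(G.secondNeighborFinset v u))
    (hsub : G.secondNeighborFinset v u ⊆ G.isolatedVerticesIn (G.closedNeighborFinset v)ᶜ) :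
    2 ≤ strongMatchingNumber G := by
  have hk : 3 ≤ k := hv ▸ hdeg v
  obtain ⟨x, y, hxy, hvx, hvy, hAB⟩ := exists_secondNeighborFinset_eq_union hvu hv
  set A := (G.neighborFinset x).erase v
  set B := (G.neighborFinset y).erase v
  have hA : #A ≤ k - 1 := card_neighborFinset_erase_le hdeg hvx.symm
  have hB : #B ≤ k - 1 := card_neighborFinset_erase_le hdeg hvy.symm
  rw [hAB] at hcard hsub
  obtain ⟨w, hw⟩ : (A \ B).Nonempty :=
    card_pos.mp (by have := card_sdiff_add_card A B; omega)
  obtain ⟨w', hw'⟩ : (B \ A).Nonempty :=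
    card_pos.mp (by have := card_sdiff_add_card B A; rw [union_comm] at this; omega)
  have hmemA : ∀ t, t ∈ A ↔ t ≠ v ∧ G.Adj x t := by simp [A]
  have hmemB : ∀ t, t ∈ B ↔ t ≠ v ∧ G.Adj y t := by simp [B]
  have hfarv : ∀ t, t ∈ G.isolatedVerticesIn (G.closedNeighborFinset v)ᶜ →
      (t ≠ v ∧ ¬ G.Adj v t) ∧ ∀ z, z ≠ v → ¬ G.Adj v z → ¬ G.Adj t z := by
    simp [mem_isolatedVerticesIn]
  obtain ⟨hwA, hwB⟩ := mem_sdiff.mp hw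
  obtain ⟨hw'B, hw'A⟩ := mem_sdiff.mp hw'
  obtain ⟨⟨hwv, hvw⟩, hwiso⟩ := hfarv w (hsub (mem_union_left _ hwA))
  obtain ⟨⟨hw'v, hvw'⟩, -⟩ := hfarv w' (hsub (mem_union_right _ hw'B))
  refine two_le_strongMatchingNumber ((hmemA w).mp hwA).2 ((hmemB w').mp hw'B).2 ?_
  simp only [Sym2.mem_iff, forall_eq_or_imp, forall_eq]
  refine ⟨⟨hxy.symm, ?_, fun h => ?_, fun h => hwB ((hmemB w).mpr ⟨hwv, h.symm⟩)⟩,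
    ?_, ?_, fun h => hw'A ((hmemA w').mpr ⟨hw'v, h⟩), hwiso w' hw'v hvw'⟩
  · rintro rfl
    exact hvw hvy
  · exact (hfarv y (hsub (mem_union_left _ ((hmemA y).mpr ⟨hvy.ne.symm, h⟩)))).1.2 hvy
  · rintro rfl
    exact hvw' hvx
  · rintro rfl
    exact hwB hw'B

end SimpleGraph

end

theorem claim1_neighbor_of_endvertex_has_degree_four_general
    {V : Type*} [Fintype V] (G : SimpleGraph V) [DecidableRel G.Adj]
    (hconn : G.Connected) (hdeg : ∀ v, G.degree v ≤ 4)
    (hsmall : (strongMatchingNumber G : ℚ) < (Fintype.card V : ℚ) / 9)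
    (hmin : ∀ s : Finset V, s ⊂ Finset.univ →
      ((s.card : ℚ) - (isolatedCount (G.induce (↑s : Set V)) : ℚ)) / 9 ≤
        strongMatchingNumber (G.induce (↑s : Set V))) :
    ∀ u v : V, G.Adj u v → G.degree u = 1 → G.degree v = 4 := by
  classical
  intro u v huv hu
  by_contra hv4
  have hproper : (G.closedNeighborFinset v)ᶜ ⊂ univ :=
    ssubset_univ_iff.mpr ((compl_ne_univ_iff_nonempty _).mpr ⟨v, by simp⟩)
  have h9 := nine_le_card_isolatedVerticesIn_add_degree huv hu hsmall (hmin _ hproper)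
  have hIU := isolatedVerticesIn_compl_subset_secondNeighborFinset hconn.preconnected huv hu
  have hIU_card := card_le_card hIU
  have hU_card := card_secondNeighborFinset_le hdeg huv.symm
  have hv3 : G.degree v = 3 := by have := hdeg v; omega
  have hUI : G.secondNeighborFinset v u ⊆ G.isolatedVerticesIn (G.closedNeighborFinset v)ᶜ :=
    (eq_of_subset_of_card_le hIU (by omega)) ▸ subset_rfl
  have hcardV : Fintype.card V ≤ 10 := by
    rw [← card_univ, ← closedNeighborFinset_union_isolatedVerticesIn_eq_univ
      hconn.preconnected huv hu hUI]
    have := card_union_le (G.closedNeighborFinset v)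
      (G.isolatedVerticesIn (G.closedNeighborFinset v)ᶜ)
    have := card_closedNeighborFinset (G := G) v
    omega
  have h2 := two_le_strongMatchingNumber_of_secondNeighborFinset_subset hdeg huv.symm hv3
    (by omega) hUI
  have : (Fintype.card V : ℚ) ≤ 10 := by exact_mod_cast hcardV
  have : (2 : ℚ) ≤ strongMatchingNumber G := by exact_mod_cast h2
  linarith

/-- Claim about a minimum counterexample to Theorem 1'. -/
theorem claim1_neighbor_of_endvertex_has_degree_four
    {V : Type*} [Fintype V] (G : SimpleGraph V) [DecidableRel G.Adj]
    (hconn : G.Connected) (hdeg : ∀ v, G.degree v ≤ 4)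
    (hC25 : ¬ Nonempty (G ≃g C25))
    (hsmall : (strongMatchingNumber G : ℚ) < (Fintype.card V : ℚ) / 9)
    (hmin : ∀ s : Finset V, s ⊂ Finset.univ →
      ((s.card : ℚ) - (isolatedCount (G.induce (↑s : Set V)) : ℚ)) / 9 ≤
        strongMatchingNumber (G.induce (↑s : Set V))) :
    ∀ u v : V, G.Adj u v → G.degree u = 1 → G.degree v = 4 :=
  claim1_neighbor_of_endvertex_has_degree_four_general G hconn hdeg hsmall hmin
end

section
/- Let G be a finite simple connected graph with maximum degree at most 4, not isomorphic to C_{2,5}, such that ν_s(G) < n(G)/9 and every induced subgraph G' of G on a proper subset of the vertices satisfies ν_s(G') ≥ (n(G') − i(G'))/9. Then no two end-vertices of G are at graph distance exactly 4 from each other. -/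
open SimpleGraph

/-!
Let `u₁ a b c u₂` be a path between end-vertices at distance four. For a set `C` containing
the ends of an induced matching `M`, a maximum induced matching of `G - N[C]` extends by `M`,
so minimality of `G` forces `9 |M| < |N[C]| + i(G - N[C])`. For `C = {u₁, a, c, u₂}` and
`M = {u₁a, cu₂}` we have `|N[C]| ≤ 9` since `b` is a common neighbour of `a` and `c`. The
vertices isolated in `G - N[C]` only see the at most five vertices of `N[C] \ C`, each of
which has a neighbour in `C`, and `b` has two; since two end-vertices never share a neighbour,
counting degrees gives `|N[C]| + i(G - N[C]) ≤ 18`, a contradiction. That end-vertices `u₁, u₂`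
never share a neighbour `a` follows in the same way from `C = {u₁, u₂, a}` and `M = {au₁}`,
except when `deg a = 4` and many vertices hang on the two other neighbours `t₁, t₂` of `a`; then
one applies the count to two edges `t₁w₁, t₂w₂` and to `C` consisting of `N[a]` and the
isolated vertices of `G - N[a]`.
-/

open Finset

lemma Finset.disjoint_of_forall_mem_ne {α : Type*} {M₁ M₂ : Finset (Sym2 α)}
    (h : ∀ e ∈ M₁, ∀ f ∈ M₂, ∀ a ∈ e, ∀ b ∈ f, a ≠ b) : Disjoint M₁ M₂ :=
  disjoint_left.mpr fun e h₁ h₂ => h e h₁ e h₂ _ e.out_fst_mem _ e.out_fst_mem rfl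

lemma Finset.exists_mem_and_not_of_card_filter_lt {α : Type*} {s : Finset α} {p q : α → Prop}
    [DecidablePred q] (hpq : ∀ x ∈ s, p x ∨ q x) (hq : #{x ∈ s | q x} < #s) :
    ∃ x ∈ s, p x ∧ ¬q x := by
  by_contra! h
  refine hq.not_ge (card_le_card fun x hx => mem_filter.mpr ⟨hx, ?_⟩)
  by_contra hqx
  exact hqx (h x hx ((hpq x hx).resolve_right hqx))

namespace IsInducedMatching

variable {V : Type*} {G : SimpleGraph V}

lemma empty : IsInducedMatching G ∅ := ⟨by simp, by simp⟩

lemma singleton {e : Sym2 V} (he : e ∈ G.edgeSet) : IsInducedMatching G {e} :=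
  ⟨by simpa using he, by simp⟩

lemma union [DecidableEq V] {M₁ M₂ : Finset (Sym2 V)} (h₁ : IsInducedMatching G M₁)
    (h₂ : IsInducedMatching G M₂)
    (h₁₂ : ∀ e ∈ M₁, ∀ f ∈ M₂, ∀ a ∈ e, ∀ b ∈ f, a ≠ b ∧ ¬G.Adj a b) :
    IsInducedMatching G (M₁ ∪ M₂) := by
  refine ⟨by simpa [Set.union_subset_iff] using ⟨h₁.1, h₂.1⟩, ?_⟩
  simp only [mem_union]
  rintro e (he | he) f (hf | hf) hef a ha b hb
  · exact h₁.2 e he f hf hef a ha b hb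
  · exact h₁₂ e he f hf a ha b hb
  · obtain ⟨hne, hadj⟩ := h₁₂ f hf e he b hb a ha
    exact ⟨hne.symm, fun h => hadj h.symm⟩
  · exact h₂.2 e he f hf hef a ha b hb

lemma pair [DecidableEq V] {e f : Sym2 V} (he : e ∈ G.edgeSet) (hf : f ∈ G.edgeSet)
    (hef : ∀ a ∈ e, ∀ b ∈ f, a ≠ b ∧ ¬G.Adj a b) : IsInducedMatching G {e, f} := by
  rw [insert_eq]
  exact (singleton he).union (singleton hf) (by simpa using hef)

lemma image_val [DecidableEq V] {s : Set V} {M : Finset (Sym2 s)}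
    (hM : IsInducedMatching (G.induce s) M) : IsInducedMatching G (M.image (Sym2.map (↑))) := by
  refine ⟨fun e he => ?_, fun e he f hf hef a ha b hb => ?_⟩
  · obtain ⟨e', he', rfl⟩ := mem_image.mp he
    have := hM.1 he'
    induction e' using Sym2.ind
    simpa using this
  · obtain ⟨e', he', rfl⟩ := mem_image.mp he
    obtain ⟨f', hf', rfl⟩ := mem_image.mp hf
    obtain ⟨a', ha', rfl⟩ := Sym2.mem_map.mp ha
    obtain ⟨b', hb', rfl⟩ := Sym2.mem_map.mp hb
    obtain ⟨hne, hadj⟩ := hM.2 e' he' f' hf' (by rintro rfl; exact hef rfl) a' ha' b' hb'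
    exact ⟨Subtype.val_injective.ne hne, hadj⟩

variable [Fintype V]

lemma bddAbove_card :
    BddAbove {n : ℕ | ∃ M : Finset (Sym2 V), IsInducedMatching G M ∧ M.card = n} :=
  ⟨Fintype.card (Sym2 V), by rintro _ ⟨M, -, rfl⟩; exact card_le_univ M⟩

lemma card_le_strongMatchingNumber_s4 {M : Finset (Sym2 V)} (hM : IsInducedMatching G M) :
    #M ≤ strongMatchingNumber G :=
  le_csSup bddAbove_card ⟨M, hM, rfl⟩

variable (G) in
lemma exists_card_eq_strongMatchingNumber :
    ∃ M : Finset (Sym2 V), IsInducedMatching G M ∧ #M = strongMatchingNumber G :=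
  Nat.sSup_mem (s := {n | ∃ M : Finset (Sym2 V), IsInducedMatching G M ∧ M.card = n})
    ⟨0, ∅, empty, card_empty⟩ bddAbove_card

end IsInducedMatching

namespace SimpleGraph

section Distance

variable {V : Type*} {G : SimpleGraph V} {u₁ u₂ a c : V}

lemma adj_unique_of_degree_eq_one {u a b : V} [Fintype (G.neighborSet u)]
    (hu : G.degree u = 1) (ha : G.Adj u a) (hb : G.Adj u b) : a = b := by
  obtain ⟨c, -, hc⟩ := degree_eq_one_iff_existsUnique_adj.mp hu
  rw [hc a ha, hc b hb]

lemma exists_adj_adj_adj_adj_of_dist_eq_four (h : G.dist u₁ u₂ = 4) :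
    ∃ a b c, G.Adj u₁ a ∧ G.Adj a b ∧ G.Adj b c ∧ G.Adj c u₂ := by
  obtain ⟨p, hp⟩ := (Reachable.of_dist_ne_zero (h ▸ four_ne_zero)).exists_walk_length_eq_dist
  rw [h] at hp
  have hend := p.getVert_length
  rw [hp] at hend
  refine ⟨p.getVert 1, p.getVert 2, p.getVert 3, ?_, ?_, ?_, ?_⟩
  · simpa using p.adj_getVert_succ (i := 0) (by omega)
  · exact p.adj_getVert_succ (i := 1) (by omega)
  · exact p.adj_getVert_succ (i := 2) (by omega)
  · simpa [hend] using p.adj_getVert_succ (i := 3) (by omega)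

lemma ne_and_not_adj_of_two_le_dist {p q : V} (h : 2 ≤ G.dist p q) : p ≠ q ∧ ¬G.Adj p q :=
  ⟨by rintro rfl; simp at h, fun hpq => by rw [dist_eq_one_iff_adj.mpr hpq] at h; omega⟩

lemma Connected.ne_and_not_adj_of_dist_eq_four (hconn : G.Connected) (h : G.dist u₁ u₂ = 4)
    (h₁ : G.Adj u₁ a) (h₄ : G.Adj c u₂) :
    ∀ p ∈ s(u₁, a), ∀ q ∈ s(c, u₂), p ≠ q ∧ ¬G.Adj p q := by
  have hd₁ := dist_eq_one_iff_adj.mpr h₁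
  have hd₄ := dist_eq_one_iff_adj.mpr h₄
  have := hconn.dist_triangle (u := u₁) (v := a) (w := u₂)
  have := hconn.dist_triangle (u := u₁) (v := c) (w := u₂)
  have := hconn.dist_triangle (u := a) (v := c) (w := u₂)
  simp only [Sym2.mem_iff]
  rintro p (rfl | rfl) q (rfl | rfl) <;> exact ne_and_not_adj_of_two_le_dist (by omega)

end Distance

variable {V : Type*} [Fintype V] [DecidableEq V] (G : SimpleGraph V) [DecidableRel G.Adj]

/-- `N[C]`. -/
def closedNbhd (C : Finset V) : Finset V := {v | ∃ x ∈ C, x = v ∨ G.Adj x v}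

/-- The isolated vertices of `G - D`, see `isolatedCount_induce_compl`. -/
def isolatedAfterDeleting (D : Finset V) : Finset V := {v | v ∉ D ∧ ∀ w, G.Adj v w → w ∈ D}

structure MinimalCounterexample : Prop where
  connected : G.Connected
  degree_le : ∀ v, G.degree v ≤ 4
  strongMatchingNumber_lt : (strongMatchingNumber G : ℚ) < Fintype.card V / 9
  le_strongMatchingNumber_induce : ∀ s : Finset V, s ⊂ univ →
    ((#s : ℚ) - isolatedCount (G.induce (↑s : Set V))) / 9 ≤
      strongMatchingNumber (G.induce (↑s : Set V))

variable {G} {C D : Finset V} {t x x' y : V}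

section ClosedNbhd

@[simp]
lemma mem_closedNbhd : y ∈ G.closedNbhd C ↔ ∃ x ∈ C, x = y ∨ G.Adj x y := by
  simp [closedNbhd]

@[simp]
lemma mem_isolatedAfterDeleting :
    y ∈ G.isolatedAfterDeleting D ↔ y ∉ D ∧ ∀ w, G.Adj y w → w ∈ D := by
  simp [isolatedAfterDeleting]

lemma subset_closedNbhd : C ⊆ G.closedNbhd C :=
  fun x hx => mem_closedNbhd.mpr ⟨x, hx, .inl rfl⟩

lemma mem_closedNbhd_of_adj (hx : x ∈ C) (h : G.Adj x y) : y ∈ G.closedNbhd C :=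
  mem_closedNbhd.mpr ⟨x, hx, .inr h⟩

lemma exists_adj_of_mem_closedNbhd_sdiff (hy : y ∈ G.closedNbhd C \ C) :
    ∃ x ∈ C, G.Adj y x := by
  obtain ⟨hyN, hyC⟩ := mem_sdiff.mp hy
  obtain ⟨x, hx, rfl | hxy⟩ := mem_closedNbhd.mp hyN
  exacts [absurd hx hyC, ⟨x, hx, hxy.symm⟩]

lemma closedNbhd_union (C C' : Finset V) :
    G.closedNbhd (C ∪ C') = G.closedNbhd C ∪ G.closedNbhd C' := by
  ext; simp [or_and_right, exists_or]

lemma closedNbhd_singleton (x : V) : G.closedNbhd {x} = insert x (G.neighborFinset x) := by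
  ext; simp [eq_comm]

lemma closedNbhd_insert_of_degree_eq_one {u a : V} (hu : G.degree u = 1) (hua : G.Adj u a)
    (ha : a ∈ C) : G.closedNbhd (insert u C) = G.closedNbhd C := by
  refine Subset.antisymm (fun y hy => ?_) (fun y hy => ?_)
  · obtain ⟨x, hx, hxy⟩ := mem_closedNbhd.mp hy
    rcases mem_insert.mp hx with rfl | hx
    · rcases hxy with rfl | hxy
      · exact mem_closedNbhd_of_adj ha hua.symm
      · exact adj_unique_of_degree_eq_one hu hua hxy ▸ subset_closedNbhd ha
    · exact mem_closedNbhd.mpr ⟨x, hx, hxy⟩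
  · obtain ⟨x, hx, hxy⟩ := mem_closedNbhd.mp hy
    exact mem_closedNbhd.mpr ⟨x, mem_insert_of_mem hx, hxy⟩

lemma isolatedCount_induce_compl :
    isolatedCount (G.induce (↑Dᶜ : Set V)) = #(G.isolatedAfterDeleting D) := by
  rw [isolatedCount, ← Set.ncard_image_of_injective _ Subtype.val_injective,
    ← Set.ncard_coe_finset]
  congr 1
  ext y
  simp [not_imp_not, and_comm]

theorem card_add_strongMatchingNumber_induce_compl_le {M : Finset (Sym2 V)}
    (hM : IsInducedMatching G M) (hMC : ∀ e ∈ M, ∀ x ∈ e, x ∈ C) :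
    #M + strongMatchingNumber (G.induce (↑(G.closedNbhd C)ᶜ : Set V)) ≤
      strongMatchingNumber G := by
  obtain ⟨M', hM', hcard⟩ :=
    IsInducedMatching.exists_card_eq_strongMatchingNumber (G.induce (↑(G.closedNbhd C)ᶜ : Set V))
  have hsep : ∀ e ∈ M, ∀ f ∈ M'.image (Sym2.map (↑)), ∀ a ∈ e, ∀ b ∈ f,
      a ≠ b ∧ ¬G.Adj a b := by
    intro e he f hf a ha b hb
    obtain ⟨f', -, rfl⟩ := mem_image.mp hf
    obtain ⟨b', -, rfl⟩ := Sym2.mem_map.mp hb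
    have hb' : (b' : V) ∉ G.closedNbhd C := by simpa using b'.2
    exact ⟨fun h => hb' (h ▸ subset_closedNbhd (hMC e he a ha)),
      fun h => hb' (mem_closedNbhd_of_adj (hMC e he a ha) h)⟩
  calc #M + strongMatchingNumber _ = #(M ∪ M'.image (Sym2.map (↑))) := by
        rw [card_union_of_disjoint (disjoint_of_forall_mem_ne fun e he f hf a ha b hb =>
          (hsep e he f hf a ha b hb).1), card_image_of_injective _
          (Sym2.map.injective Subtype.val_injective), hcard]
    _ ≤ _ := (hM.union hM'.image_val hsep).card_le_strongMatchingNumber_s4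

end ClosedNbhd

section IsolatedVertices

lemma neighborFinset_subset_of_mem_isolatedAfterDeleting_closedNbhd
    (hy : y ∈ G.isolatedAfterDeleting (G.closedNbhd C)) :
    G.neighborFinset y ⊆ G.closedNbhd C \ C := fun z hz => by
  obtain ⟨hyD, hyN⟩ := mem_isolatedAfterDeleting.mp hy
  rw [mem_neighborFinset] at hz
  exact mem_sdiff.mpr ⟨hyN z hz, fun hzC => hyD (mem_closedNbhd_of_adj hzC hz.symm)⟩

lemma degree_pos_of_mem_isolatedAfterDeleting_closedNbhd (hconn : G.Connected)
    (hC : C.Nonempty) (hy : y ∈ G.isolatedAfterDeleting (G.closedNbhd C)) : 0 < G.degree y := by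
  obtain ⟨x, hx⟩ := hC
  refine (hconn y x).degree_pos_left ?_
  rintro rfl
  exact (mem_isolatedAfterDeleting.mp hy).1 (subset_closedNbhd hx)

lemma exists_adj_of_mem_isolatedAfterDeleting_closedNbhd (hconn : G.Connected)
    (hC : C.Nonempty) (hy : y ∈ G.isolatedAfterDeleting (G.closedNbhd C)) :
    ∃ t ∈ G.closedNbhd C \ C, G.Adj y t := by
  obtain ⟨t, ht⟩ := (degree_pos_iff_exists_adj ..).mp
    (degree_pos_of_mem_isolatedAfterDeleting_closedNbhd hconn hC hy)
  exact ⟨t, neighborFinset_subset_of_mem_isolatedAfterDeleting_closedNbhd hy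
    ((mem_neighborFinset ..).mpr ht), ht⟩

lemma sum_degree_isolatedAfterDeleting_closedNbhd :
    ∑ y ∈ G.isolatedAfterDeleting (G.closedNbhd C), G.degree y =
      ∑ t ∈ G.closedNbhd C \ C, #{y ∈ G.isolatedAfterDeleting (G.closedNbhd C) | G.Adj y t} := by
  refine Eq.trans (sum_congr rfl fun y hy => ?_)
    (sum_card_bipartiteAbove_eq_sum_card_bipartiteBelow (fun y t => G.Adj y t))
  rw [← card_neighborFinset_eq_degree]
  congr 1
  ext t
  simpa [bipartiteAbove] using fun h =>
    neighborFinset_subset_of_mem_isolatedAfterDeleting_closedNbhd hy ((mem_neighborFinset ..).mpr h)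

lemma card_filter_adj_isolatedAfterDeleting_add_card_le_degree {S : Finset V} (hSD : S ⊆ D)
    (hS : ∀ x ∈ S, G.Adj t x) :
    #{y ∈ G.isolatedAfterDeleting D | G.Adj y t} + #S ≤ G.degree t := by
  rw [← card_neighborFinset_eq_degree, ← card_union_of_disjoint]
  · refine card_le_card (union_subset (fun y hy => ?_) fun x hx =>
      (mem_neighborFinset ..).mpr (hS x hx))
    exact (mem_neighborFinset ..).mpr (mem_filter.mp hy).2.symm
  · exact Finset.disjoint_left.mpr fun y hy hyS =>
      (mem_isolatedAfterDeleting.mp (mem_filter.mp hy).1).1 (hSD hyS)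

lemma card_filter_adj_isolatedAfterDeleting_le_two (hdeg : ∀ v, G.degree v ≤ 4) (hx : x ∈ D)
    (hx' : x' ∈ D) (hne : x ≠ x') (htx : G.Adj t x) (htx' : G.Adj t x') :
    #{y ∈ G.isolatedAfterDeleting D | G.Adj y t} ≤ 2 := by
  have := card_filter_adj_isolatedAfterDeleting_add_card_le_degree (G := G) (t := t)
    (D := D) (S := {x, x'}) (by simp [insert_subset_iff, hx, hx']) (by simp [htx, htx'])
  rw [card_pair hne] at this
  linarith [hdeg t]

lemma card_filter_adj_isolatedAfterDeleting_le_three (hdeg : ∀ v, G.degree v ≤ 4)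
    (ht : t ∈ G.closedNbhd C \ C) :
    #{y ∈ G.isolatedAfterDeleting (G.closedNbhd C) | G.Adj y t} ≤ 3 := by
  obtain ⟨x, hx, htx⟩ := exists_adj_of_mem_closedNbhd_sdiff ht
  have := card_filter_adj_isolatedAfterDeleting_add_card_le_degree (G := G) (t := t)
    (singleton_subset_iff.mpr (subset_closedNbhd (G := G) hx)) (by simpa using htx)
  rw [card_singleton] at this
  linarith [hdeg t]

lemma card_isolatedAfterDeleting_closedNbhd_le (hconn : G.Connected)
    (hdeg : ∀ v, G.degree v ≤ 4) (hC : C.Nonempty) :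
    #(G.isolatedAfterDeleting (G.closedNbhd C)) ≤ 3 * #(G.closedNbhd C \ C) := by
  calc #(G.isolatedAfterDeleting (G.closedNbhd C))
      ≤ ∑ y ∈ G.isolatedAfterDeleting (G.closedNbhd C), G.degree y := by
        rw [card_eq_sum_ones]
        exact sum_le_sum fun y hy =>
          degree_pos_of_mem_isolatedAfterDeleting_closedNbhd hconn hC hy
    _ = ∑ t ∈ G.closedNbhd C \ C,
          #{y ∈ G.isolatedAfterDeleting (G.closedNbhd C) | G.Adj y t} :=
        sum_degree_isolatedAfterDeleting_closedNbhd
    _ ≤ 3 * #(G.closedNbhd C \ C) := by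
        simpa [mul_comm] using sum_le_card_nsmul (G.closedNbhd C \ C) _ 3 fun t ht =>
          card_filter_adj_isolatedAfterDeleting_le_three hdeg ht

lemma card_sdiff_closedNbhd_union_isolatedAfterDeleting_add_card_le (hconn : G.Connected)
    (hdeg : ∀ v, G.degree v ≤ 4) (hC : C.Nonempty) :
    #(G.closedNbhd (G.closedNbhd C ∪ G.isolatedAfterDeleting (G.closedNbhd C)) \
        (G.closedNbhd C ∪ G.isolatedAfterDeleting (G.closedNbhd C))) +
      #(G.isolatedAfterDeleting (G.closedNbhd C)) ≤ 3 * #(G.closedNbhd C \ C) := by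
  set D := G.closedNbhd C
  set I := G.isolatedAfterDeleting D
  have hsub : (G.closedNbhd (D ∪ I) \ (D ∪ I)) ∪ I ⊆
      (D \ C).biUnion fun t => G.neighborFinset t \ D := by
    intro z hz
    simp only [mem_biUnion, mem_sdiff, mem_neighborFinset]
    rcases mem_union.mp hz with hz | hzI
    · obtain ⟨hzN, hzC₂⟩ := mem_sdiff.mp hz
      obtain ⟨x, hx, rfl | hxz⟩ := mem_closedNbhd.mp hzN
      · exact absurd hx hzC₂
      rcases mem_union.mp hx with hxD | hxI
      · exact ⟨x, ⟨hxD, fun hxC => hzC₂ (mem_union_left _ (mem_closedNbhd_of_adj hxC hxz))⟩,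
          hxz, fun hzD => hzC₂ (mem_union_left _ hzD)⟩
      · exact absurd (mem_union_left _ ((mem_isolatedAfterDeleting.mp hxI).2 z hxz)) hzC₂
    · obtain ⟨t, ht, hzt⟩ := exists_adj_of_mem_isolatedAfterDeleting_closedNbhd hconn hC hzI
      exact ⟨t, mem_sdiff.mp ht, hzt.symm, (mem_isolatedAfterDeleting.mp hzI).1⟩
  have hdisj : Disjoint (G.closedNbhd (D ∪ I) \ (D ∪ I)) I :=
    Finset.disjoint_left.mpr fun z hz hzI => (mem_sdiff.mp hz).2 (mem_union_right _ hzI)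
  rw [← card_union_of_disjoint hdisj]
  refine (card_le_card hsub).trans (card_biUnion_le_card_mul _ _ _ fun t ht => ?_) |>.trans_eq
    (mul_comm _ _)
  obtain ⟨x, hx, htx⟩ := exists_adj_of_mem_closedNbhd_sdiff ht
  have hxN : x ∈ G.neighborFinset t ∩ D := mem_inter.mpr
    ⟨(mem_neighborFinset ..).mpr htx, subset_closedNbhd hx⟩
  have := card_sdiff_add_card_inter (G.neighborFinset t) D
  have := card_pos.mpr ⟨x, hxN⟩
  rw [card_neighborFinset_eq_degree] at *
  linarith [hdeg t]

end IsolatedVertices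

namespace MinimalCounterexample

theorem nine_mul_card_lt (hG : G.MinimalCounterexample) {M : Finset (Sym2 V)}
    (hM : IsInducedMatching G M) (hMC : ∀ e ∈ M, ∀ x ∈ e, x ∈ C) (hC : C.Nonempty) :
    9 * #M < #(G.closedNbhd C) + #(G.isolatedAfterDeleting (G.closedNbhd C)) := by
  have hcompl := hG.le_strongMatchingNumber_induce (G.closedNbhd C)ᶜ <| ssubset_univ_iff.mpr <| by
    simpa [compl_eq_univ_iff] using (hC.mono subset_closedNbhd).ne_empty
  rw [isolatedCount_induce_compl, card_compl, Nat.cast_sub (card_le_univ _)] at hcompl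
  have hadd := card_add_strongMatchingNumber_induce_compl_le hM hMC
  have := hG.strongMatchingNumber_lt
  qify at hadd ⊢
  linarith

theorem eighteen_lt_of_pair (hG : G.MinimalCounterexample) {x₁ y₁ x₂ y₂ : V}
    (h₁ : G.Adj x₁ y₁) (h₂ : G.Adj x₂ y₂)
    (hsep : ∀ a ∈ s(x₁, y₁), ∀ b ∈ s(x₂, y₂), a ≠ b ∧ ¬G.Adj a b)
    (hC : x₁ ∈ C ∧ y₁ ∈ C ∧ x₂ ∈ C ∧ y₂ ∈ C) :
    18 < #(G.closedNbhd C) + #(G.isolatedAfterDeleting (G.closedNbhd C)) := by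
  have hne : s(x₁, y₁) ≠ s(x₂, y₂) := fun h =>
    (hsep x₁ (Sym2.mem_mk_left ..) x₁ (h ▸ Sym2.mem_mk_left ..)).1 rfl
  have := hG.nine_mul_card_lt (IsInducedMatching.pair h₁ h₂ hsep) (by simp [hC]) ⟨x₁, hC.1⟩
  rwa [card_pair hne] at this

theorem three_mul_card_isolatedAfterDeleting_closedNbhd_lt (hG : G.MinimalCounterexample)
    {t₁ t₂ w₁ w₂ : V} (hT : G.closedNbhd C \ C = {t₁, t₂}) (ht₁₂ : ¬G.Adj t₁ t₂)
    (hw₁ : w₁ ∈ G.isolatedAfterDeleting (G.closedNbhd C))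
    (hw₂ : w₂ ∈ G.isolatedAfterDeleting (G.closedNbhd C))
    (hw₁t₁ : G.Adj w₁ t₁) (hw₁t₂ : ¬G.Adj w₁ t₂) (hw₂t₂ : G.Adj w₂ t₂) (hw₂t₁ : ¬G.Adj w₂ t₁) :
    3 * #(G.isolatedAfterDeleting (G.closedNbhd C)) < #C + 8 := by
  set D := G.closedNbhd C
  set I := G.isolatedAfterDeleting D
  have ht₁ : t₁ ∈ D := (mem_sdiff.mp (hT ▸ mem_insert_self ..)).1
  have ht₂ : t₂ ∈ D := (mem_sdiff.mp (hT ▸ mem_insert_of_mem (mem_singleton_self _))).1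
  have hw₁D : w₁ ∉ D := (mem_isolatedAfterDeleting.mp hw₁).1
  have hw₂D : w₂ ∉ D := (mem_isolatedAfterDeleting.mp hw₂).1
  have hne : t₁ ≠ t₂ := by rintro rfl; exact hw₁t₂ hw₁t₁
  have hsep : ∀ a ∈ s(t₁, w₁), ∀ b ∈ s(t₂, w₂), a ≠ b ∧ ¬G.Adj a b := by
    simp only [Sym2.mem_iff]
    rintro a (rfl | rfl) b (rfl | rfl)
    · exact ⟨hne, ht₁₂⟩
    · exact ⟨by rintro rfl; exact hw₂D ht₁, fun h => hw₂t₁ h.symm⟩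
    · exact ⟨by rintro rfl; exact hw₁D ht₂, hw₁t₂⟩
    · exact ⟨by rintro rfl; exact hw₂t₁ hw₁t₁,
        fun h => hw₂D ((mem_isolatedAfterDeleting.mp hw₁).2 _ h)⟩
  have hred : 18 < #(G.closedNbhd (D ∪ I)) + #(G.isolatedAfterDeleting (G.closedNbhd (D ∪ I))) :=
    hG.eighteen_lt_of_pair hw₁t₁.symm hw₂t₂.symm hsep
      ⟨mem_union_left _ ht₁, mem_union_right _ hw₁, mem_union_left _ ht₂, mem_union_right _ hw₂⟩
  have hCne : C.Nonempty := by
    obtain ⟨x, hx, -⟩ := exists_adj_of_mem_closedNbhd_sdiff (hT ▸ mem_insert_self t₁ {t₂})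
    exact ⟨x, hx⟩
  have h₁ : #(G.closedNbhd (D ∪ I) \ (D ∪ I)) + #I ≤ 3 * #(D \ C) :=
    card_sdiff_closedNbhd_union_isolatedAfterDeleting_add_card_le hG.connected hG.degree_le hCne
  have h₂ : #(G.isolatedAfterDeleting (G.closedNbhd (D ∪ I))) ≤
      3 * #(G.closedNbhd (D ∪ I) \ (D ∪ I)) :=
    card_isolatedAfterDeleting_closedNbhd_le hG.connected hG.degree_le ⟨w₁, mem_union_right _ hw₁⟩
  have h₃ := card_sdiff_add_card_eq_card (subset_closedNbhd (G := G) (C := D ∪ I))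
  have h₄ : #(D ∪ I) = #D + #I := card_union_of_disjoint <|
    Finset.disjoint_right.mpr fun y hy => (mem_isolatedAfterDeleting.mp hy).1
  have h₅ : #(D \ C) + #C = #D := card_sdiff_add_card_eq_card subset_closedNbhd
  rw [hT, card_pair hne] at h₁ h₅
  omega

theorem card_isolatedAfterDeleting_closedNbhd_le_four (hG : G.MinimalCounterexample)
    {t₁ t₂ : V} (hT : G.closedNbhd C \ C = {t₁, t₂}) (hC : #C ≤ 3) :
    #(G.isolatedAfterDeleting (G.closedNbhd C)) ≤ 4 := by
  set D := G.closedNbhd C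
  set I := G.isolatedAfterDeleting D
  by_contra! hI
  have ht₁ : t₁ ∈ D \ C := hT ▸ mem_insert_self ..
  have ht₂ : t₂ ∈ D \ C := hT ▸ mem_insert_of_mem (mem_singleton_self _)
  obtain ⟨x₁, hx₁, hx₁t₁⟩ := exists_adj_of_mem_closedNbhd_sdiff ht₁
  obtain ⟨x₂, hx₂, hx₂t₂⟩ := exists_adj_of_mem_closedNbhd_sdiff ht₂
  have hIT : ∀ y ∈ I, G.Adj y t₁ ∨ G.Adj y t₂ := fun y hy => by
    obtain ⟨t, ht, hyt⟩ :=
      exists_adj_of_mem_isolatedAfterDeleting_closedNbhd hG.connected ⟨x₁, hx₁⟩ hy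
    rw [hT, mem_insert, mem_singleton] at ht
    rcases ht with rfl | rfl
    exacts [.inl hyt, .inr hyt]
  have hcnt₁ : #{y ∈ I | G.Adj y t₁} ≤ 3 :=
    card_filter_adj_isolatedAfterDeleting_le_three hG.degree_le ht₁
  have hcnt₂ : #{y ∈ I | G.Adj y t₂} ≤ 3 :=
    card_filter_adj_isolatedAfterDeleting_le_three hG.degree_le ht₂
  have hnadj : ¬G.Adj t₁ t₂ := by
    intro h
    have : #{y ∈ I | G.Adj y t₁} ≤ 2 := card_filter_adj_isolatedAfterDeleting_le_two
      hG.degree_le (subset_closedNbhd hx₁) (mem_sdiff.mp ht₂).1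
      (by rintro rfl; exact (mem_sdiff.mp ht₂).2 hx₁) hx₁t₁ h
    have : #{y ∈ I | G.Adj y t₂} ≤ 2 := card_filter_adj_isolatedAfterDeleting_le_two
      hG.degree_le (subset_closedNbhd hx₂) (mem_sdiff.mp ht₁).1
      (by rintro rfl; exact (mem_sdiff.mp ht₁).2 hx₂) hx₂t₂ h.symm
    have : I ⊆ {y ∈ I | G.Adj y t₁} ∪ {y ∈ I | G.Adj y t₂} := fun y hy => by
      simpa [hy] using hIT y hy
    linarith [card_le_card this, card_union_le {y ∈ I | G.Adj y t₁} {y ∈ I | G.Adj y t₂}]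
  obtain ⟨w₁, hw₁, hw₁t₁, hw₁t₂⟩ := exists_mem_and_not_of_card_filter_lt hIT (by omega)
  obtain ⟨w₂, hw₂, hw₂t₂, hw₂t₁⟩ :=
    exists_mem_and_not_of_card_filter_lt (fun y hy => (hIT y hy).symm) (by omega)
  have : 3 * #I < #C + 8 := hG.three_mul_card_isolatedAfterDeleting_closedNbhd_lt hT hnadj hw₁
    hw₂ hw₁t₁ hw₁t₂ hw₂t₂ hw₂t₁
  omega

theorem eq_of_adj_of_adj_of_degree_eq_one (hG : G.MinimalCounterexample)
    {a u₁ u₂ : V} (h₁ : G.Adj a u₁) (h₂ : G.Adj a u₂)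
    (d₁ : G.degree u₁ = 1) (d₂ : G.degree u₂ = 1) : u₁ = u₂ := by
  by_contra hne
  have hN : G.closedNbhd {u₁, u₂, a} = insert a (G.neighborFinset a) := by
    rw [closedNbhd_insert_of_degree_eq_one d₁ h₁.symm (by simp),
      closedNbhd_insert_of_degree_eq_one d₂ h₂.symm (by simp), closedNbhd_singleton]
  have hNcard : #(G.closedNbhd {u₁, u₂, a}) = G.degree a + 1 := by
    rw [hN, card_insert_of_notMem (by simp), card_neighborFinset_eq_degree]
  have hC : #({u₁, u₂, a} : Finset V) = 3 :=
    card_eq_three.mpr ⟨u₁, u₂, a, hne, h₁.ne', h₂.ne', rfl⟩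
  have hT : G.closedNbhd {u₁, u₂, a} \ {u₁, u₂, a} = G.neighborFinset a \ {u₁, u₂} := by
    ext t
    simp only [hN, mem_sdiff, mem_insert, mem_singleton, mem_neighborFinset]
    have : G.Adj a t → t ≠ a := fun h => h.ne'
    tauto
  have hTcard : #(G.neighborFinset a \ {u₁, u₂}) + 2 = G.degree a := by
    rw [← card_pair hne, card_sdiff_add_card_eq_card (by simp [insert_subset_iff, h₁, h₂]),
      card_neighborFinset_eq_degree]
  have hI := card_isolatedAfterDeleting_closedNbhd_le hG.connected hG.degree_le
    (C := {u₁, u₂, a}) ⟨a, by simp⟩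
  have hred := hG.nine_mul_card_lt (M := {s(a, u₁)}) (C := {u₁, u₂, a}) (.singleton h₁)
    (by simp) ⟨a, by simp⟩
  rw [hT] at hI
  rw [hNcard, card_singleton] at hred
  have hdeg := hG.degree_le a
  obtain ⟨t₁, t₂, -, hT₂⟩ := card_eq_two.mp (show #(G.neighborFinset a \ {u₁, u₂}) = 2 by omega)
  have := hG.card_isolatedAfterDeleting_closedNbhd_le_four (hT.trans hT₂) hC.le
  omega

theorem two_mul_card_isolatedAfterDeleting_closedNbhd_lt (hG : G.MinimalCounterexample)
    {a b c : V} (ha : a ∈ C) (hc : c ∈ C) (hac : a ≠ c) (hb : b ∈ G.closedNbhd C \ C)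
    (hba : G.Adj b a) (hbc : G.Adj b c) :
    2 * #(G.isolatedAfterDeleting (G.closedNbhd C)) < 4 * #(G.closedNbhd C \ C) := by
  set I := G.isolatedAfterDeleting (G.closedNbhd C)
  set T := G.closedNbhd C \ C
  set E := {y ∈ I | G.degree y = 1}
  have hpos : ∀ y ∈ I, 0 < G.degree y := fun y hy =>
    degree_pos_of_mem_isolatedAfterDeleting_closedNbhd hG.connected ⟨a, ha⟩ hy
  have hE : #E ≤ #T := by
    have hadj : ∀ y ∈ E, 1 ≤ #(T.bipartiteAbove G.Adj y) := fun y hy => by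
      obtain ⟨t, ht, hyt⟩ := exists_adj_of_mem_isolatedAfterDeleting_closedNbhd hG.connected
        ⟨a, ha⟩ (mem_filter.mp hy).1
      exact card_pos.mpr ⟨t, mem_filter.mpr ⟨ht, hyt⟩⟩
    have huniq : ∀ t ∈ T, #(E.bipartiteBelow G.Adj t) ≤ 1 := fun t ht => by
      refine card_le_one.mpr fun y hy y' hy' => ?_
      simp only [bipartiteBelow, E, mem_filter] at hy hy'
      exact hG.eq_of_adj_of_adj_of_degree_eq_one hy.2.symm hy'.2.symm hy.1.2 hy'.1.2
    simpa using card_mul_le_card_mul _ hadj huniq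
  have hsum : ∑ y ∈ I, G.degree y < 3 * #T := by
    rw [sum_degree_isolatedAfterDeleting_closedNbhd, mul_comm, ← smul_eq_mul, ← sum_const]
    refine sum_lt_sum (fun t ht => card_filter_adj_isolatedAfterDeleting_le_three hG.degree_le ht)
      ⟨b, hb, ?_⟩
    have := card_filter_adj_isolatedAfterDeleting_le_two hG.degree_le
      (subset_closedNbhd (G := G) ha) (subset_closedNbhd hc) hac hba hbc
    omega
  have hdeg : 2 * #I ≤ ∑ y ∈ I, G.degree y + #E := by
    rw [card_filter, ← sum_add_distrib, mul_comm, ← smul_eq_mul, ← sum_const]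
    exact sum_le_sum fun y hy => by have := hpos y hy; split_ifs <;> omega
  omega

theorem false_of_pendant_path (hG : G.MinimalCounterexample)
    {u₁ a b c u₂ : V} (d₁ : G.degree u₁ = 1) (d₂ : G.degree u₂ = 1)
    (h₁ : G.Adj u₁ a) (h₂ : G.Adj a b) (h₃ : G.Adj b c) (h₄ : G.Adj c u₂)
    (hsep : ∀ p ∈ s(u₁, a), ∀ q ∈ s(c, u₂), p ≠ q ∧ ¬G.Adj p q) : False := by
  have hac : a ≠ c := (hsep a (by simp) c (by simp)).1
  have hu₁u₂ : u₁ ≠ u₂ := (hsep u₁ (by simp) u₂ (by simp)).1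
  have hu₁c : u₁ ≠ c := (hsep u₁ (by simp) c (by simp)).1
  have hau₂ : a ≠ u₂ := (hsep a (by simp) u₂ (by simp)).1
  have hN : G.closedNbhd {u₁, u₂, a, c} =
      insert a (G.neighborFinset a) ∪ insert c (G.neighborFinset c) := by
    rw [closedNbhd_insert_of_degree_eq_one d₁ h₁ (by simp),
      closedNbhd_insert_of_degree_eq_one d₂ h₄.symm (by simp), insert_eq, closedNbhd_union,
      closedNbhd_singleton, closedNbhd_singleton]
  have hNcard : #(G.closedNbhd {u₁, u₂, a, c}) ≤ 9 := by
    have hb : b ∈ insert a (G.neighborFinset a) ∩ insert c (G.neighborFinset c) := by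
      simp [h₂, h₃.symm]
    have := card_union_add_card_inter (insert a (G.neighborFinset a))
      (insert c (G.neighborFinset c))
    have := card_insert_le a (G.neighborFinset a)
    have := card_insert_le c (G.neighborFinset c)
    have := card_pos.mpr ⟨b, hb⟩
    rw [card_neighborFinset_eq_degree] at *
    rw [hN]
    linarith [hG.degree_le a, hG.degree_le c]
  have hC : #({u₁, u₂, a, c} : Finset V) = 4 :=
    card_eq_four.mpr ⟨u₁, u₂, a, c, hu₁u₂, h₁.ne, hu₁c, hau₂.symm, h₄.ne', hac, rfl⟩
  have hb : b ∈ G.closedNbhd {u₁, u₂, a, c} \ {u₁, u₂, a, c} := by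
    refine mem_sdiff.mpr ⟨mem_closedNbhd_of_adj (by simp) h₂, ?_⟩
    simp only [mem_insert, mem_singleton, not_or]
    refine ⟨?_, ?_, h₂.ne', h₃.ne⟩
    · rintro rfl; exact hac (adj_unique_of_degree_eq_one d₁ h₁ h₃)
    · rintro rfl; exact hac (adj_unique_of_degree_eq_one d₂ h₂.symm h₄.symm)
  have hI := hG.two_mul_card_isolatedAfterDeleting_closedNbhd_lt (by simp) (by simp) hac hb
    h₂.symm h₃
  have hred := hG.eighteen_lt_of_pair (C := {u₁, u₂, a, c}) h₁ h₄ hsep (by simp)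
  have := card_sdiff_add_card_eq_card (subset_closedNbhd (G := G) (C := {u₁, u₂, a, c}))
  omega

end MinimalCounterexample

end SimpleGraph

theorem claim3_no_two_endvertices_at_distance_four_general
    {V : Type*} [Fintype V] (G : SimpleGraph V) [DecidableRel G.Adj]
    (hconn : G.Connected) (hdeg : ∀ v, G.degree v ≤ 4)
    (hsmall : (strongMatchingNumber G : ℚ) < (Fintype.card V : ℚ) / 9)
    (hmin : ∀ s : Finset V, s ⊂ Finset.univ →
      ((s.card : ℚ) - (isolatedCount (G.induce (↑s : Set V)) : ℚ)) / 9 ≤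
        strongMatchingNumber (G.induce (↑s : Set V))) :
    ∀ u₁ u₂ : V, G.degree u₁ = 1 → G.degree u₂ = 1 → G.dist u₁ u₂ ≠ 4 := by
  classical
  intro u₁ u₂ d₁ d₂ hdist
  obtain ⟨a, b, c, h₁, h₂, h₃, h₄⟩ := exists_adj_adj_adj_adj_of_dist_eq_four hdist
  exact MinimalCounterexample.false_of_pendant_path ⟨hconn, hdeg, hsmall, hmin⟩ d₁ d₂
    h₁ h₂ h₃ h₄ (hconn.ne_and_not_adj_of_dist_eq_four hdist h₁ h₄)

/-- Claim about a minimum counterexample to Theorem 1'. -/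
theorem claim3_no_two_endvertices_at_distance_four
    {V : Type*} [Fintype V] (G : SimpleGraph V) [DecidableRel G.Adj]
    (hconn : G.Connected) (hdeg : ∀ v, G.degree v ≤ 4)
    (hC25 : ¬ Nonempty (G ≃g C25))
    (hsmall : (strongMatchingNumber G : ℚ) < (Fintype.card V : ℚ) / 9)
    (hmin : ∀ s : Finset V, s ⊂ Finset.univ →
      ((s.card : ℚ) - (isolatedCount (G.induce (↑s : Set V)) : ℚ)) / 9 ≤
        strongMatchingNumber (G.induce (↑s : Set V))) :
    ∀ u₁ u₂ : V, G.degree u₁ = 1 → G.degree u₂ = 1 → G.dist u₁ u₂ ≠ 4 :=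
  claim3_no_two_endvertices_at_distance_four_general G hconn hdeg hsmall hmin
end

section
/- The bound of the main theorem is tight: there exists a finite simple connected graph G with maximum degree at most 4, not isomorphic to C_{2,5}, such that ν_s(G) = n(G)/9. -/
open SimpleGraph

/-!
The tight example is a triangle with two pendant vertices attached to each of its corners:
it has `9` vertices and maximum degree `4`, and since the triangle is a clique meeting
every edge, any two edges are joined by an edge, so `ν_s = 1 = 9 / 9`.
-/

section

variable {V : Type*} {G : SimpleGraph V}

lemma isInducedMatching_singleton_s19 {e : Sym2 V} (he : e ∈ G.edgeSet) :
    IsInducedMatching G {e} := by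
  refine ⟨by simpa using he, ?_⟩
  intro f hf g hg hne
  simp only [Finset.mem_singleton] at hf hg
  exact absurd (hf.trans hg.symm) hne

lemma IsInducedMatching.card_le_one_of_isClique_of_forall_adj_mem {s : Set V}
    (hs : G.IsClique s) (hcover : ∀ a b, G.Adj a b → a ∈ s ∨ b ∈ s)
    {M : Finset (Sym2 V)} (hM : IsInducedMatching G M) : M.card ≤ 1 := by
  have hmeet : ∀ e ∈ M, ∃ a ∈ e, a ∈ s := by
    intro e he
    induction e using Sym2.ind with
    | _ a b =>
      rcases hcover a b (hM.1 he) with ha | hb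
      · exact ⟨a, Sym2.mem_mk_left a b, ha⟩
      · exact ⟨b, Sym2.mem_mk_right a b, hb⟩
  refine Finset.card_le_one.mpr fun e he f hf => ?_
  by_contra hne
  obtain ⟨a, hae, has⟩ := hmeet e he
  obtain ⟨b, hbf, hbs⟩ := hmeet f hf
  obtain ⟨hab, hnadj⟩ := hM.2 e he f hf hne a hae b hbf
  exact hnadj (hs has hbs hab)

lemma strongMatchingNumber_eq_one_of_isClique_of_forall_adj_mem [Fintype V] {s : Set V}
    (hs : G.IsClique s) (hcover : ∀ a b, G.Adj a b → a ∈ s ∨ b ∈ s)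
    {e : Sym2 V} (he : e ∈ G.edgeSet) : strongMatchingNumber G = 1 :=
  IsGreatest.csSup_eq ⟨⟨{e}, isInducedMatching_singleton_s19 he, Finset.card_singleton e⟩,
    fun _ ⟨_, hM, hcard⟩ => hcard ▸ hM.card_le_one_of_isClique_of_forall_adj_mem hs hcover⟩

lemma connected_of_isClique_of_dominating [Nonempty V] {s : Set V} (hs : G.IsClique s)
    (hdom : ∀ v, ∃ u ∈ s, u = v ∨ G.Adj u v) : G.Connected := by
  have hreach : ∀ {u v}, u = v ∨ G.Adj u v → G.Reachable u v := by
    rintro u v (rfl | huv)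
    exacts [Reachable.refl u, huv.reachable]
  obtain ⟨u₀, hu₀, -⟩ := hdom (Classical.arbitrary V)
  refine (connected_iff_exists_forall_reachable G).mpr ⟨u₀, fun v => ?_⟩
  obtain ⟨u, hu, huv⟩ := hdom v
  have hu₀u : G.Reachable u₀ u := hreach ((em (u₀ = u)).imp_right (hs hu₀ hu))
  exact hu₀u.trans (hreach huv)

lemma ncard_neighborSet_eq_degree {v : V} [Fintype (G.neighborSet v)] :
    (G.neighborSet v).ncard = G.degree v := by
  rw [Set.ncard_eq_toFinset_card', Set.toFinset_card, card_neighborSet_eq_degree]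

end

/-- Vertices `0, 1, 2` form a triangle; each vertex `v ≥ 3` is a pendant attached to `v % 3`. -/
def triangleWithPendants : SimpleGraph (Fin 9) where
  Adj a b := a ≠ b ∧ (a < 3 ∨ b < 3) ∧ (a < 3 ∧ b < 3 ∨ a % 3 = b % 3)
  symm := ⟨fun _ _ h => ⟨h.1.symm, h.2.1.symm, h.2.2.imp And.symm Eq.symm⟩⟩
  loopless := ⟨fun _ h => h.1 rfl⟩

lemma triangleWithPendants_adj {a b : Fin 9} : triangleWithPendants.Adj a b ↔
    a ≠ b ∧ (a < 3 ∨ b < 3) ∧ (a < 3 ∧ b < 3 ∨ a % 3 = b % 3) :=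
  Iff.rfl

instance : DecidableRel triangleWithPendants.Adj :=
  fun _ _ => decidable_of_iff' _ triangleWithPendants_adj

lemma triangleWithPendants_isClique : triangleWithPendants.IsClique {v | v < 3} :=
  fun _ ha _ hb hab => triangleWithPendants_adj.mpr ⟨hab, Or.inl ha, Or.inl ⟨ha, hb⟩⟩

lemma triangleWithPendants_connected : triangleWithPendants.Connected :=
  connected_of_isClique_of_dominating triangleWithPendants_isClique (by decide)

lemma triangleWithPendants_strongMatchingNumber :
    strongMatchingNumber triangleWithPendants = 1 :=
  strongMatchingNumber_eq_one_of_isClique_of_forall_adj_mem triangleWithPendants_isClique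
    (fun _ _ h => (triangleWithPendants_adj.mp h).2.1) (e := s(0, 1)) (by decide)

lemma triangleWithPendants_degree_le (v : Fin 9) : triangleWithPendants.degree v ≤ 4 := by
  revert v
  decide

/-- The bound of the main theorem is tight: some connected graph with maximum degree at
most 4, not isomorphic to `C_{2,5}`, has strong matching number exactly `n(G)/9`. -/
theorem exists_tight_example :
    ∃ (n : ℕ) (G : SimpleGraph (Fin n)), G.Connected ∧
      (∀ v, (G.neighborSet v).ncard ≤ 4) ∧ ¬ Nonempty (G ≃g C25) ∧
      (strongMatchingNumber G : ℚ) = (n : ℚ) / 9 := by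
  refine ⟨9, triangleWithPendants, triangleWithPendants_connected, fun v => ?_, ?_, ?_⟩
  · rw [ncard_neighborSet_eq_degree]
    exact triangleWithPendants_degree_le v
  · rintro ⟨e⟩
    simpa using Fintype.card_congr e.toEquiv
  · rw [triangleWithPendants_strongMatchingNumber]
    norm_num
end
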